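/- arXiv:2604.14478 — 4 statements merged into one kernel-verified Lean document; each statement's English description precedes it below -/
import Mathlib

section
/- Let I be a relative ideal of a numerical semigroup S, a ∈ ℤ, L = a + S, and J = L - I. Then I and J are directly linked by L (i.e., also I = L - J) if and only if I is S-reflexive, i.e., I = S - (S - I). -/
open Pointwise

/-- `S` is a numerical semigroup, viewed as a set of integers:
a submonoid of `(ℕ,+)` with finite complement in `ℕ`. -/
def IsNumericalSemigroup (S : Set ℤ) : Prop :=
  0 ∈ S ∧ (∀ x ∈ S, ∀ y ∈ S, x + y ∈ S) ∧ (∀ x ∈ S, 0 ≤ x) ∧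
    {n : ℤ | 0 ≤ n ∧ n ∉ S}.Finite

/-- `I` is a relative ideal of `S`: a nonempty subset of `ℤ` with
`I + S ⊆ I` and `a + I ⊆ S` for some `a ∈ S`. -/
def IsRelativeIdeal (S I : Set ℤ) : Prop :=
  I.Nonempty ∧ (∀ x ∈ I, ∀ s ∈ S, x + s ∈ I) ∧ ∃ a ∈ S, ∀ x ∈ I, a + x ∈ S

/-- The semigroup-theoretic colon `H - K = {z ∈ ℤ : z + K ⊆ H}`. -/
def colon (H K : Set ℤ) : Set ℤ := {z : ℤ | ∀ k ∈ K, z + k ∈ H}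

/-- The zTranslate `t + A` of a set of integers. -/
def zTranslate (t : ℤ) (A : Set ℤ) : Set ℤ := (fun x => t + x) '' A

/-- The canonical ideal `K(S) = {F - z : z ∈ ℤ \ S}`, where `F` is the
Frobenius number of `S`. -/
def canonicalIdeal (S : Set ℤ) (F : ℤ) : Set ℤ := {y : ℤ | ∃ z, z ∉ S ∧ y = F - z}

/-- `ℕ` viewed as a subset of `ℤ`. -/
def natSet : Set ℤ := {z : ℤ | 0 ≤ z}

theorem principal_directLink_iff_reflexive (S I : Set ℤ)
    (hS : IsNumericalSemigroup S) (hI : IsRelativeIdeal S I)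
    (a : ℤ) (L J : Set ℤ) (hL : L = zTranslate a S) (hJ : J = colon L I) :
    (J = colon L I ∧ I = colon L J) ↔ I = colon S (colon S I) := by
  have key : colon L (colon L I) = colon S (colon S I) := by
    subst hL
    ext z
    simp only [colon, zTranslate, Set.mem_setOf_eq, Set.mem_image]
    constructor
    · intro h k hk
      obtain ⟨s, hs, hzs⟩ := h (a + k) (fun j hj => ⟨k + j, hk j hj, by ring⟩)
      have : z + k = s := by linarith
      rwa [this]
    · intro h k hk
      refine ⟨z + (k - a), h (k - a) (fun j hj => ?_), by ring⟩
      obtain ⟨x, hx, hxe⟩ := hk j hj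
      have : k - a + j = x := by linarith
      rwa [this]
  constructor
  · rintro ⟨-, h2⟩
    rw [hJ, key] at h2; exact h2
  · intro h
    exact ⟨hJ, by rw [hJ, key, ← h]⟩
end

section
/- For a numerical semigroup S ≠ ℕ with canonical ideal K(S) = {F(S) - z : z ∈ ℤ \ S}, one has K(S) - S = K(S) and K(S) - K(S) = S, where H - K := {z ∈ ℤ : z + K ⊆ H}. Hence S and K(S) are directly linked by K(S). -/
open Pointwise

theorem canonical_links_S_and_K (S : Set ℤ) (F : ℤ)
    (hS : IsNumericalSemigroup S) (hSne : S ≠ natSet)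
    (hF : IsGreatest {n : ℤ | 0 ≤ n ∧ n ∉ S} F) :
    colon (canonicalIdeal S F) S = canonicalIdeal S F ∧
      colon (canonicalIdeal S F) (canonicalIdeal S F) = S := by
  obtain ⟨h0, hadd, -, -⟩ := hS
  have hK : ∀ y : ℤ, y ∈ canonicalIdeal S F ↔ F - y ∉ S := by
    intro y
    constructor
    · rintro ⟨z, hz, rfl⟩; simpa using hz
    · intro h; exact ⟨F - y, h, by ring⟩
  constructor
  · ext z
    constructor
    · intro h
      have := h 0 h0
      simpa using this
    · intro hz s hs
      rw [hK] at hz ⊢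
      intro hmem
      have : (F - (z + s)) + s ∈ S := hadd _ hmem _ hs
      have : F - z ∈ S := by
        have heq : (F - (z + s)) + s = F - z := by ring
        rwa [heq] at this
      exact hz this
  · ext z
    constructor
    · intro h
      by_contra hz
      have hzK : F - (F - z) ∉ S := by simpa using hz
      have := h (F - z) ((hK _).mpr hzK)
      rw [hK] at this
      have heq : F - (z + (F - z)) = 0 := by ring
      rw [heq] at this
      exact this h0
    · intro hz k hk
      rw [hK] at hk ⊢
      intro hmem
      have : (F - (z + k)) + z ∈ S := hadd _ hmem _ hz
      have heq : (F - (z + k)) + z = F - k := by ring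
      rw [heq] at this
      exact hk this
end

section
/- Let S be a numerical semigroup, I a relative ideal of S, a ∈ ℤ, L = a + K(S), and J = L - I. Then I and J are directly linked by L if and only if I is K(S)-reflexive, i.e., I = K(S) - (K(S) - I). -/
open Pointwise

theorem canonical_directLink_iff_reflexive (S I : Set ℤ) (F : ℤ)
    (hS : IsNumericalSemigroup S) (hSne : S ≠ natSet)
    (hF : IsGreatest {n : ℤ | 0 ≤ n ∧ n ∉ S} F)
    (hI : IsRelativeIdeal S I)
    (a : ℤ) (L J : Set ℤ) (hL : L = zTranslate a (canonicalIdeal S F))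
    (hJ : J = colon L I) :
    (J = colon L I ∧ I = colon L J) ↔
      I = colon (canonicalIdeal S F) (colon (canonicalIdeal S F) I) := by
  subst hJ
  have key : colon L (colon L I) =
      colon (canonicalIdeal S F) (colon (canonicalIdeal S F) I) := by
    subst hL
    ext w
    constructor
    · intro hw u hu
      have hmem : (u + a) ∈ colon (zTranslate a (canonicalIdeal S F)) I := by
        intro i hi
        exact ⟨u + i, hu i hi, by ring⟩
      obtain ⟨x, hx, hxe⟩ := hw _ hmem
      have hxw : x = w + u := by simp only [] at hxe; linarith
      rwa [hxw] at hx
    · intro hw z hz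
      have hz' : (z - a) ∈ colon (canonicalIdeal S F) I := by
        intro i hi
        obtain ⟨x, hx, hxe⟩ := hz i hi
        have : z - a + i = x := by simp only [] at hxe; linarith
        rwa [this]
      exact ⟨w + (z - a), hw _ hz', by ring⟩
  rw [key]
  exact ⟨fun h => h.2, fun h => ⟨rfl, h⟩⟩
end

section
/- Let S = ⟨5,6,8⟩. Then the relative ideal J = {0,2} + S satisfies S - (S - J) ≠ J; that is, J is not S-reflexive. -/
open Pointwise

/-- The numerical semigroup `⟨5,6,8⟩`. -/
def S568 : Set ℤ := {z : ℤ | ∃ a b c : ℕ, z = 5 * a + 6 * b + 8 * c}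

lemma mem_S568_of_ge10 (z : ℤ) (h : 10 ≤ z) : z ∈ S568 := by
  obtain ⟨n, rfl⟩ : ∃ n : ℕ, z = 10 + n := ⟨(z - 10).toNat, by omega⟩
  obtain ⟨q, r, hr, rfl⟩ : ∃ q r, r < 5 ∧ n = 5 * q + r :=
    ⟨n / 5, n % 5, Nat.mod_lt _ (by norm_num), (Nat.div_add_mod n 5).symm⟩
  interval_cases r
  · exact ⟨q + 2, 0, 0, by push_cast; ring⟩
  · exact ⟨q + 1, 1, 0, by push_cast; ring⟩
  · exact ⟨q, 2, 0, by push_cast; ring⟩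
  · exact ⟨q + 1, 0, 1, by push_cast; ring⟩
  · exact ⟨q, 1, 1, by push_cast; ring⟩

lemma zero_mem_S568 : (0 : ℤ) ∈ S568 := ⟨0, 0, 0, by norm_num⟩

theorem example_not_reflexive_568 :
    colon S568 (colon S568 (({0, 2} : Set ℤ) + S568)) ≠ ({0, 2} : Set ℤ) + S568 := by
  intro h
  have h0J : (0 : ℤ) ∈ ({0, 2} : Set ℤ) + S568 := by
    rw [Set.mem_add]
    exact ⟨0, by simp, 0, zero_mem_S568, by ring⟩
  have h2J : (2 : ℤ) ∈ ({0, 2} : Set ℤ) + S568 := by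
    rw [Set.mem_add]
    exact ⟨2, by simp, 0, zero_mem_S568, by ring⟩
  have h4L : (4 : ℤ) ∈ colon S568 (colon S568 (({0, 2} : Set ℤ) + S568)) := by
    intro k hk
    have hk0 : k ∈ S568 := by simpa using hk 0 h0J
    have hk2 : k + 2 ∈ S568 := hk 2 h2J
    obtain ⟨a, b, c, hab⟩ := hk0
    obtain ⟨a', b', c', hab'⟩ := hk2
    have hk_nonneg : 0 ≤ k := by omega
    by_cases h6 : 6 ≤ k
    · exact mem_S568_of_ge10 _ (by omega)
    · exfalso
      push_neg at h6
      interval_cases k <;> omega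
  have h4R : (4 : ℤ) ∉ ({0, 2} : Set ℤ) + S568 := by
    rw [Set.mem_add]
    rintro ⟨x, hx, s, ⟨a, b, c, rfl⟩, hsum⟩
    rcases hx with rfl | rfl <;> omega
  rw [h] at h4L
  exact h4R h4L
end
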